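/- Let B ⊆ ℝ² be a convex body (compact convex with nonempty interior) and let s = [a, b] (a ≠ b) be a closed segment disjoint from B. For a point c ∉ B, let θ(c) = sup_{x, y ∈ B} ∠(x − c, y − c) be the angle of the minimum cone with apex c containing B, and let θ = max_{c ∈ s} θ(c). Then the measure of all lines that meet both B and s is at most 2 sin(θ/2) · ‖b − a‖; that is, the 2-dimensional Lebesgue measure of {(α, p) ∈ [0, π) × ℝ : ℓ(α, p) ∩ B ≠ ∅ and ℓ(α, p) ∩ s ≠ ∅} is at most 2 sin(θ/2) · ‖b − a‖. -/

import Mathlib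

open MeasureTheory Set

noncomputable section

/-- A point in the plane. -/
abbrev Pt : Type := EuclideanSpace ℝ (Fin 2)

/-- The line ℓ(α, p) = {(x, y) : x cos α + y sin α = p}. -/
def paramLine (α p : ℝ) : Set Pt :=
  {q : Pt | q 0 * Real.cos α + q 1 * Real.sin α = p}

/-- The set of parameters (α, p) ∈ [0, π) × ℝ of lines that meet both sets A and B. -/
def linesMeetingBoth (A B : Set Pt) : Set (ℝ × ℝ) :=
  {αp : ℝ × ℝ | αp.1 ∈ Ico 0 Real.pi ∧ (paramLine αp.1 αp.2 ∩ A).Nonempty ∧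
    (paramLine αp.1 αp.2 ∩ B).Nonempty}

/-- The angle of the minimum cone with apex c containing B:
θ(c) = sup_{x, y ∈ B} ∠(x − c, y − c). -/
def coneAngle (B : Set Pt) (c : Pt) : ℝ :=
  sSup {t : ℝ | ∃ x ∈ B, ∃ y ∈ B, t = InnerProductGeometry.angle (x - c) (y - c)}

/-!
A line meeting the segment passes through some `c = a + t • (b - a)`, `t ∈ [0, 1]`, so the lines
in question are the images under the shear `(α, t) ↦ (α, ⟪dir α, a⟫ + t * ⟪dir α, b - a⟫)` of the
pairs `(α, t)` for which the line through `c` with normal `dir α` meets `B`; the shear has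
Jacobian `|⟪dir α, b - a⟫|`. By Fubini it remains to bound, for each fixed `c`, the integral of
`|⟪dir α, b - a⟫| = ‖b - a‖ |cos (α - ν)|` over those `α`, `ν` being the polar angle of `b - a`.
As `B` is seen from `c` inside a cone of angle `θ`, these `α` lie, modulo `π`, in an interval of
length `θ`, and the integral of `|cos|` over an interval of length `θ ≤ π` is at most
`2 sin (θ / 2)`.
-/

open Real InnerProductGeometry RealInnerProductSpace
open scoped ENNReal

def dir (α : ℝ) : Pt := !₂[cos α, sin α]

lemma inner_dir (α : ℝ) (q : Pt) : ⟪dir α, q⟫ = q 0 * cos α + q 1 * sin α := by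
  simp [dir, PiLp.inner_apply, Fin.sum_univ_two, mul_comm]

lemma mem_paramLine_iff {α p : ℝ} {q : Pt} : q ∈ paramLine α p ↔ ⟪dir α, q⟫ = p := by
  rw [inner_dir]; rfl

lemma inner_dir_dir (α β : ℝ) : ⟪dir α, dir β⟫ = cos (α - β) := by
  rw [inner_dir, cos_sub]; simp [dir]; ring

lemma norm_dir (α : ℝ) : ‖dir α‖ = 1 := by
  rw [norm_eq_sqrt_real_inner, inner_dir_dir, sub_self, cos_zero, sqrt_one]

lemma dir_add_pi (α : ℝ) : dir (α + π) = -dir α := by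
  ext i; fin_cases i <;> simp [dir]

lemma dir_periodic : Function.Periodic dir (2 * π) := by
  intro α; simp [dir]

@[fun_prop]
lemma continuous_dir : Continuous dir :=
  (PiLp.continuous_toLp 2 _).comp (continuous_pi fun i => by fin_cases i <;> simp <;> fun_prop)

lemma exists_eq_norm_smul_dir (z : Pt) : ∃ ψ, z = ‖z‖ • dir ψ := by
  let w : ℂ := ⟨z 0, z 1⟩
  have hw : ‖w‖ = ‖z‖ := by
    rw [EuclideanSpace.norm_eq, Complex.norm_def, Complex.normSq_apply, Fin.sum_univ_two]
    simp [w, sq]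
  refine ⟨w.arg, ?_⟩
  ext i; fin_cases i
  · simp [dir, ← hw, Complex.norm_mul_cos_arg, w]
  · simp [dir, ← hw, Complex.norm_mul_sin_arg, w]

lemma exists_eq_norm_smul_dir_of_inner_pos {ν : ℝ} {z : Pt} (hz : 0 < ⟪dir ν, z⟫) :
    ∃ ψ ∈ Ioo (ν - π / 2) (ν + π / 2), z = ‖z‖ • dir ψ := by
  obtain ⟨ψ, hψ⟩ := exists_eq_norm_smul_dir z
  set ψ' := toIocMod two_pi_pos (ν - π) ψ
  have hψ' : dir ψ' = dir ψ := dir_periodic.sub_zsmul_eq _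
  have hmem := toIocMod_mem_Ioc two_pi_pos (ν - π) ψ
  have hcos : 0 < cos (ψ' - ν) := by
    rw [hψ, inner_smul_right, ← hψ', inner_dir_dir, ← cos_neg, neg_sub] at hz
    exact pos_of_mul_pos_right hz (norm_nonneg z)
  refine ⟨ψ', ⟨?_, ?_⟩, hψ'.symm ▸ hψ⟩ <;> by_contra! h
  · have := cos_nonpos_of_pi_div_two_le_of_le (x := -(ψ' - ν)) (by linarith) (by linarith [hmem.1])
    rw [cos_neg] at this; linarith
  · have := cos_nonpos_of_pi_div_two_le_of_le (x := ψ' - ν) (by linarith) (by linarith [hmem.2])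
    linarith

lemma angle_smul_dir_smul_dir {r s ψ₁ ψ₂ : ℝ} (hr : 0 < r) (hs : 0 < s) (h : |ψ₁ - ψ₂| ≤ π) :
    angle (r • dir ψ₁) (s • dir ψ₂) = |ψ₁ - ψ₂| := by
  rw [angle_smul_left_of_pos _ _ hr, angle_smul_right_of_pos _ _ hs, angle, inner_dir_dir,
    norm_dir, norm_dir, mul_one, div_one, ← cos_abs, arccos_cos (abs_nonneg _) h]

lemma exists_polar_angle_window_of_angle_le {B : Set Pt} (hBc : IsClosed B)
    (hBconv : Convex ℝ B) {c : Pt} (hc : c ∉ B) {θ : ℝ}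
    (hang : ∀ x ∈ B, ∀ y ∈ B, angle (x - c) (y - c) ≤ θ) :
    ∃ φ, ∀ x ∈ B, ∃ ψ ∈ Icc φ (φ + θ), x - c = ‖x - c‖ • dir ψ := by
  obtain ⟨f, u, hfc, hfB⟩ := geometric_hahn_banach_point_closed hBconv hBc hc
  obtain ⟨ν, hν⟩ := exists_eq_norm_smul_dir ((InnerProductSpace.toDual ℝ Pt).symm f)
  have hpos : ∀ x ∈ B, 0 < ⟪dir ν, x - c⟫ := fun x hx => by
    have : 0 < ⟪(InnerProductSpace.toDual ℝ Pt).symm f, x - c⟫ := by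
      rw [InnerProductSpace.toDual_symm_apply, map_sub]; linarith [hfB x hx]
    rw [hν, real_inner_smul_left] at this
    exact pos_of_mul_pos_right this (norm_nonneg _)
  choose Ψ hΨ using fun x (hx : x ∈ B) => exists_eq_norm_smul_dir_of_inner_pos (hpos x hx)
  have hdiff : ∀ x (hx : x ∈ B) y (hy : y ∈ B), |Ψ x hx - Ψ y hy| ≤ θ := by
    intro x hx y hy
    have hxc : 0 < ‖x - c‖ := norm_pos_iff.2 (sub_ne_zero.2 fun h => hc (h ▸ hx))
    have hyc : 0 < ‖y - c‖ := norm_pos_iff.2 (sub_ne_zero.2 fun h => hc (h ▸ hy))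
    have hπ : |Ψ x hx - Ψ y hy| ≤ π := by
      obtain ⟨⟨hx₁, hx₂⟩, -⟩ := hΨ x hx
      obtain ⟨⟨hy₁, hy₂⟩, -⟩ := hΨ y hy
      rw [abs_le]; constructor <;> linarith
    have := hang x hx y hy
    rwa [(hΨ x hx).2, (hΨ y hy).2, angle_smul_dir_smul_dir hxc hyc hπ] at this
  set Φ := {ψ | ∃ x, ∃ hx : x ∈ B, Ψ x hx = ψ}
  have hbdd : BddBelow Φ := ⟨ν - π / 2, by rintro _ ⟨x, hx, rfl⟩; exact (hΨ x hx).1.1.le⟩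
  refine ⟨sInf Φ, fun x hx => ⟨Ψ x hx, ⟨csInf_le hbdd ⟨x, hx, rfl⟩, ?_⟩, (hΨ x hx).2⟩⟩
  have : Ψ x hx - θ ≤ sInf Φ := le_csInf ⟨_, x, hx, rfl⟩ fun _ ⟨y, hy, hψ⟩ => hψ ▸ by
    linarith [(abs_le.1 (hdiff x hx y hy)).2]
  linarith

def transversalAngles (B : Set Pt) (c : Pt) : Set ℝ := {α | ∃ x ∈ B, ⟪dir α, x - c⟫ = 0}

lemma exists_add_int_mul_pi_mem_of_mem_transversalAngles {B : Set Pt} {c : Pt} (hc : c ∉ B)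
    {φ θ : ℝ} (hφ : ∀ x ∈ B, ∃ ψ ∈ Icc φ (φ + θ), x - c = ‖x - c‖ • dir ψ) {α : ℝ}
    (hα : α ∈ transversalAngles B c) :
    ∃ k : ℤ, α + k * π ∈ Icc (φ + π / 2) (φ + π / 2 + θ) := by
  obtain ⟨x, hx, hxα⟩ := hα
  obtain ⟨ψ, ⟨hψ₁, hψ₂⟩, hψ⟩ := hφ x hx
  have hxc : ‖x - c‖ ≠ 0 := norm_ne_zero_iff.2 (sub_ne_zero.2 fun h => hc (h ▸ hx))
  rw [hψ, inner_smul_right, inner_dir_dir] at hxα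
  obtain ⟨k, hk⟩ := cos_eq_zero_iff.1 ((mul_eq_zero.1 hxα).resolve_left hxc)
  exact ⟨-k, by push_cast; constructor <;> linarith⟩

theorem Function.Periodic.setLIntegral_le_of_exists_add_int_mul_mem {f : ℝ → ℝ≥0∞} {T : ℝ}
    (hf : Function.Periodic f T) (hT : 0 < T) (hfm : Measurable f) {S I : Set ℝ} {t : ℝ}
    (hI : MeasurableSet I) (hSt : S ⊆ Icc t (t + T)) (hSI : ∀ α ∈ S, ∃ k : ℤ, α + k * T ∈ I) :
    ∫⁻ α in S, f α ≤ ∫⁻ α in I, f α := by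
  have hD := isAddFundamentalDomain_Ioc hT t
  have hS : S =ᵐ[volume] (S ∩ Ioc t (t + T) : Set ℝ) := by
    conv_lhs => rw [← inter_eq_left.2 hSt]
    exact ae_eq_set_inter (ae_eq_refl S) Ioc_ae_eq_Icc.symm
  have hcover : ∀ α ∈ S, f α ≤ ∑' g : AddSubgroup.zmultiples T, I.indicator f (g +ᵥ α) := by
    intro α hα
    obtain ⟨k, hk⟩ := hSI α hα
    refine le_trans (le_of_eq ?_)
      (ENNReal.le_tsum ⟨k * T, AddSubgroup.intCast_mul_mem_zmultiples T k⟩)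
    rw [AddSubgroup.mk_vadd, vadd_eq_add, add_comm, indicator_of_mem hk, hf.int_mul]
  have hGm : ∀ g : AddSubgroup.zmultiples T, Measurable fun α => I.indicator f (g +ᵥ α) :=
    fun g => (hfm.indicator hI).comp (measurable_const_add (g : ℝ))
  calc ∫⁻ α in S, f α = ∫⁻ α in S ∩ Ioc t (t + T), f α := setLIntegral_congr hS
    _ ≤ ∫⁻ α in S ∩ Ioc t (t + T), ∑' g : AddSubgroup.zmultiples T, I.indicator f (g +ᵥ α) :=
      setLIntegral_mono (Measurable.tsum hGm) fun α hα => hcover α hα.1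
    _ ≤ ∫⁻ α in Ioc t (t + T), ∑' g : AddSubgroup.zmultiples T, I.indicator f (g +ᵥ α) :=
      lintegral_mono_set inter_subset_right
    _ = ∫⁻ α, I.indicator f α := by
      rw [lintegral_tsum fun g => (hGm g).aemeasurable, hD.lintegral_eq_tsum'']
    _ = ∫⁻ α in I, f α := lintegral_indicator hI _

lemma integral_abs_cos_eq_of_le_pi_div_two {a b : ℝ} (hab : a ≤ b) (ha : -(π / 2) ≤ a)
    (hb : b ≤ π / 2) :
    ∫ x in a..b, |cos x| = sin b - sin a := by
  rw [← integral_cos]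
  refine intervalIntegral.integral_congr fun x hx => abs_of_nonneg (cos_nonneg_of_mem_Icc ?_)
  rw [uIcc_of_le hab] at hx
  exact ⟨ha.trans hx.1, hx.2.trans hb⟩

lemma integral_abs_cos_eq_of_pi_div_two_le {a b : ℝ} (hab : a ≤ b) (ha : π / 2 ≤ a)
    (hb : b ≤ π + π / 2) :
    ∫ x in a..b, |cos x| = sin a - sin b := by
  rw [← neg_sub, ← integral_cos, ← intervalIntegral.integral_neg]
  refine intervalIntegral.integral_congr fun x hx => abs_of_nonpos ?_
  rw [uIcc_of_le hab] at hx
  exact cos_nonpos_of_pi_div_two_le_of_le (ha.trans hx.1) (hx.2.trans hb)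

lemma integral_abs_cos_le {ρ θ : ℝ} (hρ : ρ ∈ Icc (-(π / 2)) (π / 2)) (hθ : θ ∈ Icc 0 π) :
    ∫ x in ρ..ρ + θ, |cos x| ≤ 2 * sin (θ / 2) := by
  obtain ⟨hρ₁, hρ₂⟩ := hρ
  obtain ⟨hθ₁, hθ₂⟩ := hθ
  have hsin : 0 ≤ sin (θ / 2) := sin_nonneg_of_nonneg_of_le_pi (by linarith) (by linarith)
  rcases le_total (ρ + θ) (π / 2) with h | h
  · rw [integral_abs_cos_eq_of_le_pi_div_two (by linarith) hρ₁ h, sin_sub_sin]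
    have := cos_le_one ((ρ + θ + ρ) / 2)
    rw [show (ρ + θ - ρ) / 2 = θ / 2 by ring]
    nlinarith
  · rw [← intervalIntegral.integral_add_adjacent_intervals (b := π / 2)
      (continuous_cos.abs.intervalIntegrable _ _) (continuous_cos.abs.intervalIntegrable _ _),
      integral_abs_cos_eq_of_le_pi_div_two hρ₂ hρ₁ le_rfl,
      integral_abs_cos_eq_of_pi_div_two_le h le_rfl (by linarith), sin_pi_div_two]
    -- the midpoint `ρ + θ / 2` lies within `θ / 2` of `π / 2`
    have hmid : cos (θ / 2) ≤ sin (ρ + θ / 2) := by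
      rw [← cos_pi_div_two_sub, ← cos_abs (π / 2 - _)]
      exact cos_le_cos_of_nonneg_of_le_pi (abs_nonneg _) (by linarith)
        (abs_le.2 ⟨by linarith, by linarith⟩)
    have hsum : sin ρ + sin (ρ + θ) = 2 * sin (ρ + θ / 2) * cos (θ / 2) := by
      rw [sin_add_sin, ← cos_neg]; ring_nf
    have hcos : 0 ≤ cos (θ / 2) := cos_nonneg_of_mem_Icc ⟨by linarith, by linarith⟩
    nlinarith [sin_sq_add_cos_sq (θ / 2), sin_le_one (θ / 2)]

lemma measurable_ofReal_abs_inner_dir (v : Pt) :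
    Measurable fun α => ENNReal.ofReal |⟪dir α, v⟫| :=
  (continuous_dir.inner continuous_const).abs.measurable.ennreal_ofReal

lemma setLIntegral_abs_inner_dir_le {v : Pt} {ν s θ : ℝ} (hv : v = ‖v‖ • dir ν)
    (hs : s - ν ∈ Icc (-(π / 2)) (π / 2)) (hθ : θ ∈ Icc 0 π) :
    ∫⁻ α in Icc s (s + θ), ENNReal.ofReal |⟪dir α, v⟫|
      ≤ ENNReal.ofReal (2 * sin (θ / 2) * ‖v‖) := by
  have hcos : ∀ α, |⟪dir α, v⟫| = ‖v‖ * |cos (α - ν)| := fun α => by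
    nth_rw 1 [hv]; rw [inner_smul_right, inner_dir_dir, abs_mul, abs_norm]
  simp_rw [hcos]
  rw [← ofReal_integral_eq_lintegral_ofReal
      (by fun_prop : Continuous fun α => ‖v‖ * |cos (α - ν)|).integrableOn_Icc
      (ae_of_all _ fun α => by positivity),
    integral_Icc_eq_integral_Ioc, ← intervalIntegral.integral_of_le (by linarith [hθ.1]),
    intervalIntegral.integral_const_mul,
    intervalIntegral.integral_comp_sub_right (fun x => |cos x|),
    show s + θ - ν = s - ν + θ by ring]
  refine ENNReal.ofReal_le_ofReal ?_
  nlinarith [integral_abs_cos_le hs hθ, norm_nonneg v]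

theorem setLIntegral_transversalAngles_le {B : Set Pt} (hBc : IsClosed B) (hBconv : Convex ℝ B)
    {c : Pt} (hc : c ∉ B) {θ : ℝ} (hθ : θ ∈ Icc 0 π)
    (hang : ∀ x ∈ B, ∀ y ∈ B, angle (x - c) (y - c) ≤ θ) (v : Pt) :
    ∫⁻ α in Icc 0 π ∩ transversalAngles B c, ENNReal.ofReal |⟪dir α, v⟫|
      ≤ ENNReal.ofReal (2 * sin (θ / 2) * ‖v‖) := by
  obtain ⟨φ, hφ⟩ := exists_polar_angle_window_of_angle_le hBc hBconv hc hang
  obtain ⟨ν, hν⟩ := exists_eq_norm_smul_dir v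
  -- shift `[φ + π / 2, φ + π / 2 + θ]` by a multiple of `π` to within `π / 2` of `ν`
  set n := toIcoDiv pi_pos (ν - π / 2) (φ + π / 2)
  set s := toIcoMod pi_pos (ν - π / 2) (φ + π / 2)
  have hs : s + n * π = φ + π / 2 := toIcoMod_add_toIcoDiv_mul _ _ _
  have hsν := toIcoMod_mem_Ico pi_pos (ν - π / 2) (φ + π / 2)
  have hperiodic : Function.Periodic (fun α => ENNReal.ofReal |⟪dir α, v⟫|) π := fun α => by
    simp only [dir_add_pi, inner_neg_left, abs_neg]
  refine (hperiodic.setLIntegral_le_of_exists_add_int_mul_mem (t := 0) (I := Icc s (s + θ)) pi_pos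
    (measurable_ofReal_abs_inner_dir v) measurableSet_Icc
    (by rw [zero_add]; exact inter_subset_left)
    fun α hα => ?_).trans (setLIntegral_abs_inner_dir_le hν
      ⟨by linarith [hsν.1], by linarith [hsν.2]⟩ hθ)
  obtain ⟨k, hk⟩ := exists_add_int_mul_pi_mem_of_mem_transversalAngles hc hφ hα.2
  exact ⟨k - n, by push_cast; constructor <;> linarith [hk.1, hk.2]⟩

open scoped Pointwise in
lemma volume_image_affine (c m : ℝ) (s : Set ℝ) :
    volume ((fun t => c + m * t) '' s) = ENNReal.ofReal |m| * volume s := by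
  have : (fun t => c + m * t) '' s = c +ᵥ m • s := by
    rw [← image_smul, ← image_vadd, image_image]; rfl
  rw [this, measure_vadd, Measure.addHaar_smul, Module.finrank_self, pow_one]

def shear (g h : ℝ → ℝ) (q : ℝ × ℝ) : ℝ × ℝ := (q.1, g q.1 + h q.1 * q.2)

theorem volume_image_shear {W : Set (ℝ × ℝ)} (hW : IsCompact W) {g h : ℝ → ℝ}
    (hg : Continuous g) (hh : Continuous h) :
    volume (shear g h '' W)
      = ((volume.withDensity fun α => ENNReal.ofReal |h α|).prod volume) W := by
  have hshear : Continuous (shear g h) := by unfold shear; fun_prop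
  have hslice : ∀ α, Prod.mk α ⁻¹' (shear g h '' W)
      = (fun t => g α + h α * t) '' (Prod.mk α ⁻¹' W) := by
    intro α; ext p; constructor
    · rintro ⟨⟨β, t⟩, hq, hqe⟩
      obtain ⟨rfl, rfl⟩ := Prod.ext_iff.1 hqe
      exact ⟨t, hq, rfl⟩
    · rintro ⟨t, ht, rfl⟩
      exact ⟨(α, t), ht, rfl⟩
  rw [Measure.volume_eq_prod, Measure.prod_apply (hW.image hshear).measurableSet,
    Measure.prod_apply hW.measurableSet,
    lintegral_withDensity_eq_lintegral_mul _ hh.abs.measurable.ennreal_ofReal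
      (measurable_measure_prodMk_left hW.measurableSet)]
  exact lintegral_congr fun α => by rw [hslice, volume_image_affine]; rfl

def segmentTransversals (B : Set Pt) (a v : Pt) : Set (ℝ × ℝ) :=
  {q | q.1 ∈ Icc 0 π ∧ q.2 ∈ Icc 0 1 ∧ q.1 ∈ transversalAngles B (a + q.2 • v)}

lemma isCompact_segmentTransversals {B : Set Pt} (hB : IsCompact B) (a v : Pt) :
    IsCompact (segmentTransversals B a v) := by
  have hK : IsCompact (((Icc 0 π ×ˢ Icc 0 1) ×ˢ B) ∩
      {p : (ℝ × ℝ) × Pt | ⟪dir p.1.1, p.2 - (a + p.1.2 • v)⟫ = 0}) :=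
    ((isCompact_Icc.prod isCompact_Icc).prod hB).inter_right
      (isClosed_eq (by fun_prop) (by fun_prop))
  convert hK.image continuous_fst using 1
  ext ⟨α, t⟩
  simp [segmentTransversals, transversalAngles]
  tauto

lemma linesMeetingBoth_subset_image_shear (B : Set Pt) (a b : Pt) :
    linesMeetingBoth B (segment ℝ a b) ⊆
      shear (fun α => ⟪dir α, a⟫) (fun α => ⟪dir α, b - a⟫) '' segmentTransversals B a (b - a) := by
  rintro ⟨α, p⟩ ⟨hα, ⟨x, hxl, hxB⟩, ⟨z, hzl, hzs⟩⟩
  rw [segment_eq_image'] at hzs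
  obtain ⟨t, ht, rfl⟩ := hzs
  rw [mem_paramLine_iff] at hxl hzl
  dsimp only at hα hxl hzl
  refine ⟨(α, t), ⟨Ico_subset_Icc_self hα, ht, x, hxB, ?_⟩, ?_⟩
  · rw [inner_sub_right, hxl, hzl, sub_self]
  · rw [← hzl, inner_add_right, inner_smul_right, mul_comm]; rfl

theorem withDensity_prod_segmentTransversals_le {B : Set Pt} (hB : IsCompact B)
    (hBconv : Convex ℝ B) {a b : Pt} (hdisj : Disjoint (segment ℝ a b) B) {θ : ℝ}
    (hθ : θ ∈ Icc 0 π) (hang : ∀ c ∈ segment ℝ a b, ∀ x ∈ B, ∀ y ∈ B, angle (x - c) (y - c) ≤ θ) :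
    ((volume.withDensity fun α => ENNReal.ofReal |⟪dir α, b - a⟫|).prod volume)
      (segmentTransversals B a (b - a)) ≤ ENNReal.ofReal (2 * sin (θ / 2) * ‖b - a‖) := by
  rw [Measure.prod_apply_symm (isCompact_segmentTransversals hB a (b - a)).measurableSet]
  calc _ ≤ ∫⁻ t, (Icc (0 : ℝ) 1).indicator
          (fun _ => ENNReal.ofReal (2 * sin (θ / 2) * ‖b - a‖)) t :=
        lintegral_mono fun t => ?_
    _ = ENNReal.ofReal (2 * sin (θ / 2) * ‖b - a‖) := by
        rw [lintegral_indicator_const measurableSet_Icc, Real.volume_Icc, sub_zero,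
          ENNReal.ofReal_one, mul_one]
  by_cases ht : t ∈ Icc 0 1
  · have hc : a + t • (b - a) ∈ segment ℝ a b := segment_eq_image' ℝ a b ▸ mem_image_of_mem _ ht
    rw [indicator_of_mem ht]
    refine (measure_mono (show _ ⊆ Icc 0 π ∩ transversalAngles B (a + t • (b - a)) from
      fun α hα => ⟨hα.1, hα.2.2⟩)).trans ?_
    rw [withDensity_apply']
    exact setLIntegral_transversalAngles_le hB.isClosed hBconv (disjoint_left.1 hdisj hc) hθ
      (hang _ hc) (b - a)
  · rw [indicator_of_notMem ht, nonpos_iff_eq_zero]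
    exact measure_mono_null (fun α hα => ht hα.2.1) measure_empty

lemma coneAngle_nonneg (B : Set Pt) (c : Pt) : 0 ≤ coneAngle B c :=
  Real.sSup_nonneg (by rintro _ ⟨x, -, y, -, rfl⟩; exact angle_nonneg _ _)

lemma coneAngle_le_pi (B : Set Pt) (c : Pt) : coneAngle B c ≤ π :=
  Real.sSup_le (by rintro _ ⟨x, -, y, -, rfl⟩; exact angle_le_pi _ _) pi_pos.le

lemma angle_le_coneAngle {B : Set Pt} {c x y : Pt} (hx : x ∈ B) (hy : y ∈ B) :
    angle (x - c) (y - c) ≤ coneAngle B c :=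
  le_csSup ⟨π, by rintro _ ⟨x, -, y, -, rfl⟩; exact angle_le_pi _ _⟩ ⟨x, hx, y, hy, rfl⟩

theorem measure_lines_meeting_body_and_segment_general
    (B : Set Pt) (hBcomp : IsCompact B) (hBconv : Convex ℝ B)
    (a b : Pt)
    (hdisj : Disjoint (segment ℝ a b) B)
    (θ : ℝ) (hθ : θ = sSup {t : ℝ | ∃ c ∈ segment ℝ a b, t = coneAngle B c}) :
    volume (linesMeetingBoth B (segment ℝ a b))
      ≤ ENNReal.ofReal (2 * Real.sin (θ / 2) * ‖b - a‖) := by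
  have hbdd : BddAbove {t : ℝ | ∃ c ∈ segment ℝ a b, t = coneAngle B c} :=
    ⟨π, by rintro _ ⟨c, -, rfl⟩; exact coneAngle_le_pi B c⟩
  have hθπ : θ ∈ Icc 0 π := hθ ▸
    ⟨Real.sSup_nonneg (by rintro _ ⟨c, -, rfl⟩; exact coneAngle_nonneg B c),
      Real.sSup_le (by rintro _ ⟨c, -, rfl⟩; exact coneAngle_le_pi B c) pi_pos.le⟩
  have hang : ∀ c ∈ segment ℝ a b, ∀ x ∈ B, ∀ y ∈ B, angle (x - c) (y - c) ≤ θ :=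
    fun c hc x hx y hy => (angle_le_coneAngle hx hy).trans (hθ ▸ le_csSup hbdd ⟨c, hc, rfl⟩)
  calc volume (linesMeetingBoth B (segment ℝ a b))
      ≤ volume (shear (fun α => ⟪dir α, a⟫) (fun α => ⟪dir α, b - a⟫) ''
          segmentTransversals B a (b - a)) :=
        measure_mono (linesMeetingBoth_subset_image_shear B a b)
    _ = ((volume.withDensity fun α => ENNReal.ofReal |⟪dir α, b - a⟫|).prod volume)
          (segmentTransversals B a (b - a)) :=
        volume_image_shear (isCompact_segmentTransversals hBcomp a (b - a)) (by fun_prop)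
          (by fun_prop)
    _ ≤ _ := withDensity_prod_segmentTransversals_le hBcomp hBconv hdisj hθπ hang

/-- Lemma 8: the measure of all lines meeting both a convex body B and a
segment s disjoint from B is at most 2 sin(θ/2) · |s|, where
θ = max_{c ∈ s} θ(c) is the maximum over apexes c ∈ s of the angle of the minimum
cone with apex c containing B. -/
theorem measure_lines_meeting_body_and_segment
    (B : Set Pt) (hBcomp : IsCompact B) (hBconv : Convex ℝ B)
    (hBint : (interior B).Nonempty)
    (a b : Pt) (hab : a ≠ b)
    (hdisj : Disjoint (segment ℝ a b) B)
    (θ : ℝ) (hθ : θ = sSup {t : ℝ | ∃ c ∈ segment ℝ a b, t = coneAngle B c}) :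
    volume (linesMeetingBoth B (segment ℝ a b))
      ≤ ENNReal.ofReal (2 * Real.sin (θ / 2) * ‖b - a‖) :=
  measure_lines_meeting_body_and_segment_general B hBcomp hBconv a b hdisj θ hθ
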